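/- Let A ⊆ ℤ, n ∈ ℤ with n ∉ A, and suppose there exists s ∈ ℕ with s ≥ 1 such that Mχ_A(n) = (1/(s+1)) Σ_{j=n+1}^{n+s} χ_A(j). Then 2·Mχ_A(n) ≤ Mχ_A(n−1) + Mχ_A(n+1). -/
import Mathlib


open Classical

/-- Discrete noncentered average `A_{r,s}f(n) = (1/(r+s+1)) ∑_{j=-r}^{s} |f(n+j)|`. -/
noncomputable def avg (f : ℤ → ℝ) (r s : ℕ) (n : ℤ) : ℝ :=
  (1 / (r + s + 1 : ℝ)) * ∑ j ∈ Finset.Icc (-(r : ℤ)) (s : ℤ), |f (n + j)|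

/-- Discrete noncentered Hardy–Littlewood maximal function `Mf(n) = sup_{r,s∈ℕ} A_{r,s}f(n)`. -/
noncomputable def M (f : ℤ → ℝ) (n : ℤ) : ℝ :=
  ⨆ r : ℕ, ⨆ s : ℕ, avg f r s n

/-- Characteristic function of `A ⊆ ℤ`. -/
noncomputable def chi (A : Set ℤ) (n : ℤ) : ℝ := if n ∈ A then 1 else 0

/-- The set of convex points `S₊f`. -/
def Splus (f : ℤ → ℝ) : Set ℤ := {n : ℤ | 2 * f n ≤ f (n + 1) + f (n - 1)}

/-- The set of concave points `S₋f`. -/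
def Sminus (f : ℤ → ℝ) : Set ℤ := (Splus f)ᶜ

/-- The left boundary `∂ₗS₋f`. -/
def bdl (f : ℤ → ℝ) : Set ℤ := {n : ℤ | n ∈ Sminus f ∧ n - 1 ∈ Splus f}

/-- The right boundary `∂ᵣS₋f`. -/
def bdr (f : ℤ → ℝ) : Set ℤ := {n : ℤ | n ∈ Sminus f ∧ n + 1 ∈ Splus f}

lemma chi_nonneg (A : Set ℤ) (n : ℤ) : 0 ≤ chi A n := by
  unfold chi; split <;> norm_num

lemma chi_le_one (A : Set ℤ) (n : ℤ) : chi A n ≤ 1 := by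
  unfold chi; split <;> norm_num

lemma avg_le_one (A : Set ℤ) (r s : ℕ) (n : ℤ) : avg (chi A) r s n ≤ 1 := by
  unfold avg
  have hcard : (Finset.Icc (-(r : ℤ)) (s : ℤ)).card = r + s + 1 := by
    rw [Int.card_Icc]; omega
  have hb : ∑ j ∈ Finset.Icc (-(r : ℤ)) (s : ℤ), |chi A (n + j)| ≤ (r + s + 1 : ℝ) := by
    calc ∑ j ∈ Finset.Icc (-(r : ℤ)) (s : ℤ), |chi A (n + j)|
        ≤ ∑ _j ∈ Finset.Icc (-(r : ℤ)) (s : ℤ), (1:ℝ) := by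
          apply Finset.sum_le_sum; intro i _
          rw [abs_of_nonneg (chi_nonneg A _)]; exact chi_le_one A _
      _ = (r + s + 1 : ℝ) := by rw [Finset.sum_const, nsmul_eq_mul, mul_one, hcard]; push_cast; ring
  have hpos : (0:ℝ) < r + s + 1 := by positivity
  rw [one_div, inv_mul_le_iff₀ hpos, mul_one]
  exact hb

lemma le_M (A : Set ℤ) (r s : ℕ) (n : ℤ) : avg (chi A) r s n ≤ M (chi A) n := by
  have h1 : avg (chi A) r s n ≤ ⨆ t : ℕ, avg (chi A) r t n :=
    le_ciSup (f := fun t : ℕ => avg (chi A) r t n)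
      ⟨1, by rintro x ⟨t, rfl⟩; exact avg_le_one A r t n⟩ s
  refine h1.trans (le_ciSup (f := fun u : ℕ => ⨆ t : ℕ, avg (chi A) u t n) ?_ r)
  exact ⟨1, by rintro x ⟨t, rfl⟩; exact ciSup_le fun u => avg_le_one A t u n⟩

lemma sum_shift (A : Set ℤ) (m : ℤ) (k : ℕ) :
    ∑ j ∈ Finset.Icc (-(0 : ℤ)) (k : ℤ), |chi A (m + j)| = ∑ j ∈ Finset.Icc m (m + k), chi A j := by
  have h0 : Finset.Icc m (m + (k:ℤ)) = Finset.map (addLeftEmbedding m) (Finset.Icc 0 (k:ℤ)) := by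
    rw [Finset.map_add_left_Icc, add_zero]
  rw [neg_zero, h0, Finset.sum_map]
  simp [addLeftEmbedding, abs_of_nonneg (chi_nonneg A _)]

theorem convexity_outside_set (A : Set ℤ) (n : ℤ) (hn : n ∉ A) (s : ℕ) (hs : 1 ≤ s)
    (h : M (chi A) n = (1 / (s + 1 : ℝ)) * ∑ j ∈ Finset.Icc (n + 1) (n + (s : ℤ)), chi A j) :
    2 * M (chi A) n ≤ M (chi A) (n - 1) + M (chi A) (n + 1) := by
  set T := ∑ j ∈ Finset.Icc (n + 1) (n + (s : ℤ)), chi A j with hT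
  have hT0 : 0 ≤ T := Finset.sum_nonneg fun i _ => chi_nonneg A i
  have hsR : (1:ℝ) ≤ (s:ℝ) := by exact_mod_cast hs
  have hcast : ((s - 1 : ℕ) : ℝ) = (s:ℝ) - 1 := by
    push_cast [hs]; ring
  -- right neighbour
  have e1 : avg (chi A) 0 (s-1) (n+1) = (1/(s:ℝ)) * T := by
    rw [avg]
    have h1 : (-((0:ℕ):ℤ)) = -(0:ℤ) := by norm_num
    rw [h1, sum_shift A (n+1) (s-1)]
    have h2 : Finset.Icc (n+1) (n+1+((s-1:ℕ):ℤ)) = Finset.Icc (n+1) (n+(s:ℤ)) := by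
      congr 1; omega
    rw [h2, hT]
    congr 2
    push_cast [hcast]
    ring
  have hR : (1/(s:ℝ)) * T ≤ M (chi A) (n+1) := e1 ▸ le_M A 0 (s-1) (n+1)
  -- left neighbour
  have e2 : avg (chi A) 0 (s+1) (n-1) = (1/((s:ℝ)+2)) * ∑ j ∈ Finset.Icc (n-1) (n+(s:ℤ)), chi A j := by
    rw [avg]
    have h1 : (-((0:ℕ):ℤ)) = -(0:ℤ) := by norm_num
    rw [h1, sum_shift A (n-1) (s+1)]
    have h2 : Finset.Icc (n-1) (n-1+((s+1:ℕ):ℤ)) = Finset.Icc (n-1) (n+(s:ℤ)) := by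
      congr 1; push_cast; ring
    rw [h2]
    congr 2
    push_cast
    ring
  have hsub : T ≤ ∑ j ∈ Finset.Icc (n-1) (n+(s:ℤ)), chi A j := by
    apply Finset.sum_le_sum_of_subset_of_nonneg
    · intro x hx
      simp only [Finset.mem_Icc] at *
      omega
    · intro i _ _; exact chi_nonneg A i
  have hL : (1/((s:ℝ)+2)) * T ≤ M (chi A) (n-1) := by
    have := le_M A 0 (s+1) (n-1)
    rw [e2] at this
    refine le_trans ?_ this
    apply mul_le_mul_of_nonneg_left hsub
    positivity
  rw [h]
  have hs0 : (0:ℝ) < s := by linarith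
  have coeff : 2 * (1/((s:ℝ)+1)) ≤ 1/((s:ℝ)+2) + 1/(s:ℝ) := by
    rw [mul_one_div, div_add_div _ _ (by linarith) hs0.ne', div_le_div_iff₀ (by linarith) (by positivity)]
    nlinarith
  have hkey := mul_le_mul_of_nonneg_right coeff hT0
  linarith
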